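/- arXiv:1702.04041 — 2 statements merged into one kernel-verified Lean document; each statement's English description precedes it below -/
import Mathlib

section
/- Let m ≥ 1 be an integer, let δ > 0, and let h ∈ ℤ^m have all coordinates h_i ≥ 1. Then ∫_{[0,1]^m} (‖⟨h,β⟩‖ · |log ‖⟨h,β⟩‖|^{1+δ})^{−1} dβ ≤ 2m·δ^{−1}·(log 2)^{−δ}. -/
/-!
Reduced mod 1, `β ↦ ⟨h, β⟩` is a continuous homomorphism from the torus `(ℝ/ℤ)^m` onto `ℝ/ℤ`
(surjective as soon as one `h i ≠ 0`), so it carries Haar measure to Haar measure. Hence the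
integral equals `∫_{ℝ/ℤ} f ‖y‖ dy = 2 ∫_0^{1/2} f x dx` with `f x = (x |log x|^{1+δ})⁻¹`, whatever
`h` is. The substitution `x = e^{-s}` turns this into `2 ∫_{log 2}^∞ s^{-1-δ} ds`,
so the integral is exactly `2 δ⁻¹ (log 2)^{-δ}`.
-/

open MeasureTheory

noncomputable section

/-- `‖x‖`: the distance from the real number `x` to the nearest integer. -/
def distToInt (x : ℝ) : ℝ := |x - round x|

open Set Real
open scoped ENNReal

lemma distToInt_eq_norm (x : ℝ) : distToInt x = ‖(x : UnitAddCircle)‖ :=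
  UnitAddCircle.norm_eq.symm

namespace UnitAddTorus

variable {ι : Type*} [Fintype ι]

def sumZSMul (h : ι → ℤ) : UnitAddTorus ι →+ UnitAddCircle :=
  ∑ j, h j • Pi.evalAddMonoidHom (fun _ ↦ UnitAddCircle) j

@[simp]
lemma sumZSMul_apply (h : ι → ℤ) (y : UnitAddTorus ι) : sumZSMul h y = ∑ j, h j • y j := by
  simp [sumZSMul]

lemma continuous_sumZSMul (h : ι → ℤ) : Continuous (sumZSMul h) := by
  rw [show ⇑(sumZSMul h) = fun y ↦ ∑ j, h j • y j from funext (sumZSMul_apply h)]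
  fun_prop

lemma surjective_sumZSMul {h : ι → ℤ} {i : ι} (hi : h i ≠ 0) :
    Function.Surjective (sumZSMul h) := by
  classical
  intro z
  refine ⟨Pi.single i (DivisibleBy.div z (h i)), ?_⟩
  simp [Pi.single_apply, DivisibleBy.div_cancel z hi]

lemma measurePreserving_sumZSMul {h : ι → ℤ} {i : ι} (hi : h i ≠ 0) :
    MeasurePreserving (sumZSMul h) :=
  AddMonoidHom.measurePreserving (continuous_sumZSMul h) (surjective_sumZSMul hi)
    (by simp [volume_pi, Measure.pi_univ])

/-- `UnitAddTorus.lintegral_preimage` is stated for this product measure, not for `volume`. -/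
lemma volume_eq_pi_haarAddCircle :
    (volume : Measure (UnitAddTorus ι)) = Measure.pi fun _ ↦ AddCircle.haarAddCircle := by
  simp [volume_pi, AddCircle.volume_eq_smul_haarAddCircle]

lemma lintegral_unitCube_comp_sum {h : ι → ℤ} {i : ι} (hi : h i ≠ 0)
    {F : UnitAddCircle → ℝ≥0∞} (hF : Measurable F) :
    ∫⁻ β in univ.pi fun _ : ι ↦ Icc (0 : ℝ) 1, F ↑(∑ j, (h j : ℝ) * β j) = ∫⁻ y, F y := by
  have hcube : {x : ι → ℝ | ∀ i, x i ∈ Ioc ((0 : ι → ℝ) i) ((0 : ι → ℝ) i + 1)} =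
      univ.pi fun _ ↦ Ioc 0 1 := by
    ext; simp
  have hpre : ∫⁻ y, F (sumZSMul h y) ∂(Measure.pi fun _ ↦ AddCircle.haarAddCircle) =
      ∫⁻ x in {x : ι → ℝ | ∀ i, x i ∈ Ioc ((0 : ι → ℝ) i) ((0 : ι → ℝ) i + 1)},
        F (sumZSMul h fun i ↦ x i) :=
    UnitAddTorus.lintegral_preimage _ 0
  rw [← (measurePreserving_sumZSMul hi).lintegral_comp hF, volume_eq_pi_haarAddCircle, hpre,
    hcube, volume_pi, Measure.restrict_congr_set Measure.univ_pi_Ioc_ae_eq_Icc, ← pi_univ_Icc]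
  congr! with β
  simp [← zsmul_eq_mul]

end UnitAddTorus

lemma lintegral_Ioc_comp_abs (g : ℝ → ℝ≥0∞) {c : ℝ} (hc : 0 ≤ c) :
    ∫⁻ x in Ioc (-c) c, g |x| = 2 * ∫⁻ x in Ioc 0 c, g x := by
  have hpos : ∫⁻ x in Ioc 0 c, g |x| = ∫⁻ x in Ioc 0 c, g x :=
    setLIntegral_congr_fun measurableSet_Ioc fun x hx ↦ by rw [abs_of_pos hx.1]
  have hneg : ∫⁻ x in Ico 0 c, g |x| = ∫⁻ x in Ioc (-c) 0, g |x| := by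
    simpa using (Measure.measurePreserving_neg volume).setLIntegral_comp_preimage_emb
      measurableEmbedding_neg (fun y ↦ g |y|) (Ioc (-c) 0)
  rw [← Ioc_union_Ioc_eq_Ioc (neg_nonpos.2 hc) hc, lintegral_union measurableSet_Ioc
    (Ioc_disjoint_Ioc_of_le le_rfl), ← hneg, Measure.restrict_congr_set Ico_ae_eq_Ioc, hpos,
    two_mul]

lemma lintegral_comp_norm_unitAddCircle (g : ℝ → ℝ≥0∞) :
    ∫⁻ y : UnitAddCircle, g ‖y‖ = 2 * ∫⁻ x in Ioc 0 (1 / 2), g x := by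
  rw [← UnitAddCircle.lintegral_preimage (-(1 / 2)), show -(1 / 2) + 1 = (1 / 2 : ℝ) by norm_num,
    ← lintegral_Ioc_comp_abs g (by norm_num)]
  refine setLIntegral_congr_fun measurableSet_Ioc fun x hx ↦ ?_
  rw [(AddCircle.norm_coe_eq_abs_iff (p := 1) one_ne_zero).2]
  exact abs_le.2 ⟨by linarith [hx.1], by linarith [hx.2]⟩

lemma lintegral_Ioi_rpow_of_lt {p b : ℝ} (hp : p < -1) (hb : 0 < b) :
    ∫⁻ s in Ioi b, ENNReal.ofReal (s ^ p) = ENNReal.ofReal (-b ^ (p + 1) / (p + 1)) := by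
  rw [← ofReal_integral_eq_lintegral_ofReal (integrableOn_Ioi_rpow_of_lt hp hb),
    integral_Ioi_rpow_of_lt hp hb]
  filter_upwards [ae_restrict_mem measurableSet_Ioi] with s hs
  exact rpow_nonneg (hb.trans hs).le _

lemma lintegral_Ioc_inv_mul_abs_log_rpow {δ a : ℝ} (hδ : 0 < δ) (ha₀ : 0 < a) (ha₁ : a < 1) :
    ∫⁻ x in Ioc 0 a, ENNReal.ofReal (x * |log x| ^ (1 + δ))⁻¹ =
      ENNReal.ofReal (δ⁻¹ * (-log a) ^ (-δ)) := by
  set b := -log a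
  have hb : 0 < b := neg_pos.2 (log_neg ha₀ ha₁)
  have himage : (fun s ↦ exp (-s)) '' Ici b = Ioc 0 a := by
    change (exp ∘ Neg.neg) '' Ici b = _
    rw [image_comp, image_neg_Ici, image_exp_Iic, neg_neg, exp_log ha₀]
  have hderiv : ∀ s ∈ Ici b, HasDerivWithinAt (fun s ↦ exp (-s)) (-exp (-s)) (Ici b) s :=
    fun s _ ↦ by simpa using ((hasDerivAt_neg s).exp).hasDerivWithinAt
  rw [← himage, lintegral_image_eq_lintegral_abs_deriv_mul measurableSet_Ici hderiv
    (fun s _ t _ hst ↦ neg_injective (exp_injective hst)),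
    Measure.restrict_congr_set Ioi_ae_eq_Ici.symm]
  calc ∫⁻ s in Ioi b, ENNReal.ofReal |-exp (-s)| *
        ENNReal.ofReal (exp (-s) * |log (exp (-s))| ^ (1 + δ))⁻¹
      = ∫⁻ s in Ioi b, ENNReal.ofReal (s ^ (-(1 + δ))) := by
        refine setLIntegral_congr_fun measurableSet_Ioi fun s hs ↦ ?_
        have hs₀ : 0 < s := hb.trans hs
        rw [← ENNReal.ofReal_mul (abs_nonneg _), log_exp, abs_neg, abs_neg, abs_of_pos (exp_pos _),
          abs_of_pos hs₀, rpow_neg hs₀.le, mul_inv, ← mul_assoc, mul_inv_cancel₀ (exp_pos _).ne',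
          one_mul]
    _ = ENNReal.ofReal (δ⁻¹ * b ^ (-δ)) := by
        rw [lintegral_Ioi_rpow_of_lt (by linarith) hb, show -(1 + δ) + 1 = -δ by ring]
        congr 1
        field_simp

lemma integral_unitCube_eq {ι : Type*} [Fintype ι] {δ : ℝ} (hδ : 0 < δ) {h : ι → ℤ} {i : ι}
    (hi : h i ≠ 0) :
    ∫ β in univ.pi fun _ : ι ↦ Icc (0 : ℝ) 1,
        (distToInt (∑ j, (h j : ℝ) * β j) *
          |log (distToInt (∑ j, (h j : ℝ) * β j))| ^ (1 + δ))⁻¹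
      = 2 * δ⁻¹ * log 2 ^ (-δ) := by
  let g : ℝ → ℝ≥0∞ := fun x ↦ ENNReal.ofReal (x * |log x| ^ (1 + δ))⁻¹
  simp_rw [distToInt_eq_norm]
  rw [integral_eq_lintegral_of_nonneg_ae (.of_forall fun β ↦ by positivity) (by fun_prop),
    UnitAddTorus.lintegral_unitCube_comp_sum (F := fun y ↦ g ‖y‖) hi (by fun_prop),
    lintegral_comp_norm_unitAddCircle g,
    lintegral_Ioc_inv_mul_abs_log_rpow hδ (by norm_num) (by norm_num), one_div, log_inv, neg_neg,
    ENNReal.toReal_mul, ENNReal.toReal_ofReal (by positivity), ENNReal.toReal_ofNat, mul_assoc]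

/-- integral estimate from the proof of Lemma 5 of the paper.
For `m ≥ 1`, `δ > 0` and `h ∈ ℤ^m` with all coordinates `h i ≥ 1`,
`∫_{[0,1]^m} (‖⟨h,β⟩‖ · |log ‖⟨h,β⟩‖|^{1+δ})⁻¹ dβ ≤ 2 m δ⁻¹ (log 2)^{-δ}`. -/
theorem integral_bound (m : ℕ) (hm : 0 < m) (δ : ℝ) (hδ : 0 < δ)
    (h : Fin m → ℤ) (hh : ∀ i, 1 ≤ h i) :
    ∫ β in Set.pi Set.univ (fun _ : Fin m => Set.Icc (0 : ℝ) 1),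
        (distToInt (∑ j, (h j : ℝ) * β j) *
          |Real.log (distToInt (∑ j, (h j : ℝ) * β j))| ^ ((1 : ℝ) + δ))⁻¹
      ≤ 2 * m * δ⁻¹ * Real.log 2 ^ (-δ) := by
  rw [integral_unitCube_eq hδ (i := ⟨0, hm⟩) (zero_lt_one.trans_le (hh ⟨0, hm⟩)).ne']
  have hm₁ : (1 : ℝ) ≤ m := by exact_mod_cast hm
  have hbound : 0 ≤ 2 * δ⁻¹ * log 2 ^ (-δ) := by positivity
  nlinarith
end
end

section
/- Let m ≥ 1 and N ≥ 0 be integers, let A_0 ⊆ ℝ^m be an axes-parallel box all of whose side lengths are at most 1, let x_1, …, x_N ∈ ℝ^m, and let A = A_0 \ ⋃_{i=1}^N ([0,1)^m + x_i). Then there exist axes-parallel boxes B_1, …, B_l with l ≤ (N+1)^{m−1}, whose interiors are pairwise disjoint, such that A ⊆ B_1 ∪ ⋯ ∪ B_l and B_1 ∪ ⋯ ∪ B_l is contained in the closure of A. -/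
noncomputable section

/-- An axes-parallel box in `ℝ^m`: a product of `m` bounded intervals (each of
which may be open, closed or half-open, i.e. any bounded order-connected set). -/
def IsBox {m : ℕ} (B : Set (Fin m → ℝ)) : Prop :=
  ∃ J : Fin m → Set ℝ, (∀ j, (J j).OrdConnected ∧ Bornology.IsBounded (J j)) ∧
    B = Set.pi Set.univ J

lemma chain_image_card_le {N : ℕ} (f : ℝ → Fin N → Bool) (S : Set ℝ)
    (h : ∀ (i : Fin N) (r s u : ℝ), r ∈ S → s ∈ S → u ∈ S → r ≤ s → s ≤ u →
      f r i = f u i → f s i = f r i) :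
    (Set.toFinite (f '' S)).toFinset.card ≤ N + 1 := by
  classical
  set V := (Set.toFinite (f '' S)).toFinset with hV
  have hmem : ∀ w ∈ V, ∃ s ∈ S, f s = w := by
    intro w hw
    rw [hV, Set.Finite.mem_toFinset] at hw
    obtain ⟨s, hs, hfs⟩ := hw
    exact ⟨s, hs, hfs⟩
  let t : (Fin N → Bool) → ℝ := fun w => if h : ∃ s ∈ S, f s = w then h.choose else 0
  have ht : ∀ w ∈ V, t w ∈ S ∧ f (t w) = w := by
    intro w hw
    have h' := hmem w hw
    simp only [t, dif_pos h']
    exact ⟨h'.choose_spec.1, h'.choose_spec.2⟩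
  let D : (Fin N → Bool) → Finset (Fin N) :=
    fun w => Finset.univ.filter (fun i => ∃ r ∈ S, r ≤ t w ∧ f r i ≠ f (t w) i)
  have hkey : ∀ w ∈ V, ∀ w' ∈ V, t w < t w' → (D w).card < (D w').card := by
    intro w hw w' hw' hlt
    obtain ⟨htw, hfw⟩ := ht w hw
    obtain ⟨htw', hfw'⟩ := ht w' hw'
    have hne : w ≠ w' := by
      rintro rfl; exact absurd rfl (ne_of_lt hlt)
    apply Finset.card_lt_card
    constructor
    · intro i hi
      simp only [D, Finset.mem_filter, Finset.mem_univ, true_and] at hi ⊢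
      obtain ⟨r, hrS, hrle, hrne⟩ := hi
      by_cases hc : f (t w) i = f (t w') i
      · exact ⟨r, hrS, le_trans hrle hlt.le, fun he => hrne (he.trans hc.symm)⟩
      · exact ⟨t w, htw, hlt.le, hc⟩
    · intro hsub
      have : f (t w) ≠ f (t w') := by rw [hfw, hfw']; exact hne
      obtain ⟨i, hi⟩ := Function.ne_iff.mp this
      have hiw' : i ∈ D w' := by
        simp only [D, Finset.mem_filter, Finset.mem_univ, true_and]
        exact ⟨t w, htw, hlt.le, hi⟩
      have hiw : i ∈ D w := hsub hiw'
      simp only [D, Finset.mem_filter, Finset.mem_univ, true_and] at hiw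
      obtain ⟨r, hrS, hrle, hrne⟩ := hiw
      have hru : f r i = f (t w') i := by
        revert hrne hi; cases f r i <;> cases f (t w) i <;> cases f (t w') i <;> simp
      have := h i r (t w) (t w') hrS htw htw' hrle hlt.le hru
      exact hrne this.symm
  have hinj : Set.InjOn (fun w => (D w).card) ↑V := by
    intro w hw w' hw' heq
    by_contra hne
    have htne : t w ≠ t w' := by
      intro he
      apply hne
      have h1 := (ht w hw).2
      have h2 := (ht w' hw').2
      rw [← h1, ← h2, he]
    rcases lt_or_gt_of_ne htne with hlt | hlt
    · exact absurd heq (ne_of_lt (hkey w hw w' hw' hlt))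
    · exact absurd heq.symm (ne_of_lt (hkey w' hw' w hw hlt))
  have hmaps : ∀ w ∈ V, (D w).card ∈ Finset.range (N + 1) := by
    intro w hw
    simp only [Finset.mem_range, Nat.lt_succ_iff]
    calc (D w).card ≤ (Finset.univ : Finset (Fin N)).card := Finset.card_le_card (Finset.filter_subset _ _)
    _ = N := by simp
  calc V.card ≤ (Finset.range (N + 1)).card := Finset.card_le_card_of_injOn _ hmaps hinj
  _ = N + 1 := Finset.card_range _

def bdLast (m : ℕ) (hm : 0 < m) : Fin m := ⟨m - 1, Nat.sub_lt hm Nat.one_pos⟩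

def bdPb {m N : ℕ} (x : Fin N → Fin m → ℝ) (j : Fin m) (u : ℝ) (i : Fin N) : Bool :=
  decide (x i j ≤ u ∧ u < x i j + 1)

def bdPat {m N : ℕ} (hm : 0 < m) (x : Fin N → Fin m → ℝ) (v : Fin m → ℝ)
    (j : Fin m) : Fin N → Bool :=
  if j = bdLast m hm then fun _ => false else bdPb x j (v j)

lemma bdPbT {m N : ℕ} (x : Fin N → Fin m → ℝ) (j : Fin m) (u : ℝ) (i : Fin N) :
    bdPb x j u i = true ↔ (x i j ≤ u ∧ u < x i j + 1) := by simp [bdPb]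

lemma bdPbF {m N : ℕ} (x : Fin N → Fin m → ℝ) (j : Fin m) (u : ℝ) (i : Fin N) :
    bdPb x j u i = false ↔ ¬(x i j ≤ u ∧ u < x i j + 1) := by simp [bdPb]

/-- box decomposition lemma from Section 5 of the paper.
Let `m ≥ 1`, let `A₀ ⊆ ℝ^m` be an axes-parallel box with all side lengths at
most `1` (a product of bounded intervals of diameter at most `1`), let
`x_1, …, x_N ∈ ℝ^m` and let `A = A₀ \ ⋃_i ([0,1)^m + x_i)`.  Then `A` is
covered by at most `(N+1)^{m-1}` axes-parallel boxes with pairwise disjoint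
interiors, whose union is contained in the closure of `A`. -/
theorem box_decomposition (m N : ℕ) (hm : 0 < m) (I : Fin m → Set ℝ)
    (hI : ∀ j, (I j).OrdConnected ∧ Bornology.IsBounded (I j) ∧ Metric.diam (I j) ≤ 1)
    (x : Fin N → Fin m → ℝ) :
    ∃ (l : ℕ) (B : Fin l → Set (Fin m → ℝ)),
      l ≤ (N + 1) ^ (m - 1) ∧
      (∀ t, IsBox (B t)) ∧
      (∀ t t', t ≠ t' → Disjoint (interior (B t)) (interior (B t'))) ∧
      (Set.pi Set.univ I \ ⋃ i, {v | ∀ j, v j - x i j ∈ Set.Ico (0 : ℝ) 1}) ⊆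
        (⋃ t, B t) ∧
      (⋃ t, B t) ⊆
        closure (Set.pi Set.univ I \ ⋃ i, {v | ∀ j, v j - x i j ∈ Set.Ico (0 : ℝ) 1}) := by
  classical
  set last : Fin m := bdLast m hm with hlast
  set A : Set (Fin m → ℝ) :=
    Set.pi Set.univ I \ ⋃ i, {v | ∀ j, v j - x i j ∈ Set.Ico (0 : ℝ) 1} with hAdef
  have hAmem : ∀ v, v ∈ A ↔ (∀ j, v j ∈ I j) ∧
      ∀ i : Fin N, ¬ ∀ j, x i j ≤ v j ∧ v j < x i j + 1 := by
    intro v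
    constructor
    · rintro ⟨h1, h2⟩
      refine ⟨fun j => h1 j (Set.mem_univ j), fun i hi => h2 ?_⟩
      exact Set.mem_iUnion.mpr ⟨i, fun j => Set.mem_Ico.mpr
        ⟨by linarith [(hi j).1], by linarith [(hi j).2]⟩⟩
    · rintro ⟨h1, h2⟩
      refine ⟨fun j _ => h1 j, fun hc => ?_⟩
      obtain ⟨i, hi⟩ := Set.mem_iUnion.mp hc
      refine h2 i (fun j => ?_)
      have hj := Set.mem_Ico.mp (hi j)
      constructor <;> [linarith [hj.1]; linarith [hj.2]]
  have key : ∀ (j : Fin m) (i : Fin N) (a b c : ℝ), a ∈ I j → b ∈ I j → a ≤ c → c ≤ b →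
      ¬(x i j ≤ a ∧ a < x i j + 1) → ¬(x i j ≤ b ∧ b < x i j + 1) →
      ¬(x i j ≤ c ∧ c < x i j + 1) := by
    intro j i a b c haI hbI hac hcb hna hnb hc
    push_neg at hna hnb
    have hax : a < x i j := by
      by_contra h'
      push_neg at h'
      have := hna h'
      linarith [hc.2]
    have hbx : x i j + 1 ≤ b := hnb (le_trans hc.1 hcb)
    have hd := Metric.dist_le_diam_of_mem (hI j).2.1 haI hbI
    rw [Real.dist_eq] at hd
    have hd1 : |a - b| ≤ 1 := le_trans hd (hI j).2.2
    have := abs_le.mp hd1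
    linarith [this.1]
  set R := bdPat hm x '' A with hR
  set RF := (Set.toFinite R).toFinset with hRF
  refine ⟨RF.card,
    fun t => {v | v ∈ A ∧ bdPat hm x v = ((RF.equivFin.symm t : ↥RF) : Fin m → Fin N → Bool)},
    ?_, ?_, ?_, ?_, ?_⟩
  · -- cardinality bound
    set W : Fin m → Finset (Fin N → Bool) := fun j =>
      if j = last then {fun _ => false}
      else (Set.toFinite ((fun u => bdPb x j u) '' I j)).toFinset with hW
    have hsub : RF ⊆ Fintype.piFinset W := by
      intro g hg
      rw [Set.Finite.mem_toFinset] at hg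
      obtain ⟨v, hv, rfl⟩ := hg
      rw [Fintype.mem_piFinset]
      intro j
      by_cases hj : j = last
      · subst hj
        simp [hW, bdPat, ← hlast]
      · simp only [hW, if_neg hj, Set.Finite.mem_toFinset]
        refine ⟨v j, (hAmem v).mp hv |>.1 j, ?_⟩
        simp [bdPat, ← hlast, hj]
    calc RF.card ≤ (Fintype.piFinset W).card := Finset.card_le_card hsub
      _ = ∏ j, (W j).card := Fintype.card_piFinset W
      _ = (W last).card * ∏ j ∈ Finset.univ.erase last, (W j).card :=
          (Finset.mul_prod_erase _ _ (Finset.mem_univ last)).symm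
      _ ≤ 1 * ∏ j ∈ Finset.univ.erase last, (N + 1) := by
          apply Nat.mul_le_mul
          · simp [hW]
          · apply Finset.prod_le_prod'
            intro j hj
            have hj' : j ≠ last := (Finset.mem_erase.mp hj).1
            simp only [hW, if_neg hj']
            apply chain_image_card_le
            intro i r s u hr hs hu hrs hsu hru
            cases hfr : bdPb x j r i
            · rw [hfr] at hru
              rw [bdPbF]
              exact key j i r u s hr hu hrs hsu ((bdPbF _ _ _ _).mp hfr)
                ((bdPbF _ _ _ _).mp hru.symm)
            · rw [hfr] at hru
              rw [bdPbT]
              have h1 := (bdPbT _ _ _ _).mp hfr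
              have h2 := (bdPbT _ _ _ _).mp hru.symm
              exact ⟨le_trans h1.1 hrs, lt_of_le_of_lt hsu h2.2⟩
      _ = (N + 1) ^ (m - 1) := by
          rw [one_mul, Finset.prod_const]
          congr 1
          rw [Finset.card_erase_of_mem (Finset.mem_univ _), Finset.card_univ, Fintype.card_fin]
  · -- each B t is a box
    intro t
    obtain ⟨g, hgR, hgeq⟩ : ∃ g, g ∈ R ∧
        ((RF.equivFin.symm t : ↥RF) : Fin m → Fin N → Bool) = g :=
      ⟨_, (Set.Finite.mem_toFinset _).mp (RF.equivFin.symm t).2, rfl⟩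
    dsimp only
    rw [hgeq]
    obtain ⟨v₀, hv₀, hgv₀⟩ := hgR
    have hglast : g last = fun _ => false := by
      rw [← hgv₀]; simp [bdPat, ← hlast]
    refine ⟨fun j => if j = last then
        {u | u ∈ I last ∧ ∀ i : Fin N, (∀ j', j' ≠ last → g j' i = true) →
          ¬(x i last ≤ u ∧ u < x i last + 1)}
      else {u | u ∈ I j ∧ bdPb x j u = g j}, ?_, ?_⟩
    · intro j
      by_cases hj : j = last
      · subst hj
        dsimp only
        rw [if_pos rfl]
        refine ⟨?_, ?_⟩
        · constructor
          rintro a ⟨haI, ha⟩ b ⟨hbI, hb⟩ c hc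
          refine ⟨(hI last).1.out haI hbI hc, fun i hi => ?_⟩
          exact key last i a b c haI hbI hc.1 hc.2 (ha i hi) (hb i hi)
        · exact ((hI last).2.1).subset (fun u hu => hu.1)
      · dsimp only
        rw [if_neg hj]
        refine ⟨?_, ?_⟩
        · constructor
          rintro a ⟨haI, ha⟩ b ⟨hbI, hb⟩ c hc
          refine ⟨(hI j).1.out haI hbI hc, ?_⟩
          funext i
          have ha' := congrFun ha i
          have hb' := congrFun hb i
          cases hgi : g j i
          · rw [hgi] at ha' hb'
            rw [bdPbF]
            exact key j i a b c haI hbI hc.1 hc.2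
              ((bdPbF _ _ _ _).mp ha') ((bdPbF _ _ _ _).mp hb')
          · rw [hgi] at ha' hb'
            rw [bdPbT]
            have h1 := (bdPbT _ _ _ _).mp ha'
            have h2 := (bdPbT _ _ _ _).mp hb'
            exact ⟨le_trans h1.1 hc.1, lt_of_le_of_lt hc.2 h2.2⟩
        · exact ((hI j).2.1).subset (fun u hu => hu.1)
    · ext v
      simp only [Set.mem_setOf_eq, Set.mem_univ_pi]
      constructor
      · rintro ⟨hvA, hvpat⟩ j
        by_cases hj : j = last
        · subst hj
          rw [if_pos rfl]
          refine ⟨(hAmem v).mp hvA |>.1 last, fun i hact hIco => ?_⟩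
          refine ((hAmem v).mp hvA).2 i (fun j' => ?_)
          by_cases hj' : j' = last
          · subst hj'; exact hIco
          · have hp : bdPb x j' (v j') = g j' := by
              have := congrFun hvpat j'
              simpa [bdPat, ← hlast, hj'] using this
            exact (bdPbT _ _ _ _).mp ((congrFun hp i).trans (hact j' hj'))
        · rw [if_neg hj]
          refine ⟨(hAmem v).mp hvA |>.1 j, ?_⟩
          have := congrFun hvpat j
          simpa [bdPat, ← hlast, hj] using this
      · intro hv
        have hvI : ∀ j, v j ∈ I j := by
          intro j
          have := hv j
          by_cases hj : j = last
          · subst hj; rw [if_pos rfl] at this; exact this.1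
          · rw [if_neg hj] at this; exact this.1
        have hvact : ∀ j, j ≠ last → bdPb x j (v j) = g j := by
          intro j hj
          have := hv j
          rw [if_neg hj] at this
          exact this.2
        have hvlast := hv last
        rw [if_pos rfl] at hvlast
        have hvA : v ∈ A := by
          rw [hAmem]
          refine ⟨hvI, fun i hi => ?_⟩
          refine hvlast.2 i (fun j' hj' => ?_) (hi last)
          rw [← hvact j' hj']
          exact (bdPbT _ _ _ _).mpr (hi j')
        refine ⟨hvA, ?_⟩
        funext j
        by_cases hj : j = last
        · subst hj
          rw [hglast]
          simp [bdPat, ← hlast]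
        · rw [← hvact j hj]
          simp [bdPat, ← hlast, hj]
  · -- disjoint interiors
    intro t t' htt
    rw [Set.disjoint_left]
    intro v hv hv'
    have h1 := (interior_subset hv).2
    have h2 := (interior_subset hv').2
    exact htt (RF.equivFin.symm.injective (Subtype.ext (h1.symm.trans h2)))
  · -- cover
    intro v hv
    have hvR : bdPat hm x v ∈ RF := by
      rw [Set.Finite.mem_toFinset]
      exact ⟨v, hv, rfl⟩
    refine Set.mem_iUnion.mpr ⟨RF.equivFin ⟨bdPat hm x v, hvR⟩, hv, ?_⟩
    rw [Equiv.symm_apply_apply]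
  · -- inside closure
    refine Set.iUnion_subset (fun t v hv => ?_)
    exact subset_closure hv.1
end
end
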